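/- arXiv:1812.00260 — 2 statements merged into one kernel-verified Lean document; each statement's English description precedes it below -/
import Mathlib

section
/- Fix an integer t* ≥ 1 and define the likelihood of one observation censored at t* as L(u) = ∏_{k=1}^{t*}(1 − u_k) (= F_u((t*,∞))). Then Z := ∫ L dΠ_{c,F0} ∈ (0,∞) and the measure Π_{c,F0} weighted by the density L equals Z · Π', where Π' = ⨂_{s≥1} Beta(c(s)F0({s}), c(s)F0((s,∞)) + 1{s ≤ t*}). That is, the posterior distribution of a beta-Stacy process BS(c,F0) given one censored observation T > t* is again a beta-Stacy process with the stated updated parameters. -/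
open MeasureTheory Set
open scoped ENNReal NNReal

/-! # Setup

Stick-breaking representation of the beta-Stacy prior `BS(c, F0)`: `Q` (denoted
`Π_{c,F0}` in the paper) is the product probability measure on `[0,1]^{ℕ+}` whose `t`-th
coordinate is `Beta(c(t)F0({t}), c(t)F0((t,∞)))`, characterized by its cylinder values
(hypothesis `hQ`).  The likelihood of one observation censored at `t*` is
`L(u) = ∏_{k=1}^{t*} (1 - u_k) = F_u((t*,∞))`. -/

/-- The Beta distribution with parameters `a, b > 0`, as a measure on `ℝ`
(supported on `(0,1)`). -/
noncomputable def betaMeasure (a b : ℝ) : Measure ℝ :=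
  (volume.restrict (Set.Ioo (0 : ℝ) 1)).withDensity
    (fun x => ENNReal.ofReal
      (Real.Gamma (a + b) / (Real.Gamma a * Real.Gamma b) * x ^ (a - 1) * (1 - x) ^ (b - 1)))

/-- `F0((t,∞)) = ∑_{s > t} F0({s})`. -/
noncomputable def survF0 (F0 : ℕ+ → ℝ) (t : ℕ) : ℝ :=
  ∑' s : ℕ+, if t < (s : ℕ) then F0 s else 0

open Filter


variable {a b : ℝ}

lemma complex_eq_real_on_Ioc : ∀ x ∈ Set.Ioc (0:ℝ) 1,
    (x:ℂ) ^ ((a:ℂ) - 1) * (1 - (x:ℂ)) ^ ((b:ℂ) - 1)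
      = ((x ^ (a - 1) * (1 - x) ^ (b - 1) : ℝ) : ℂ) := by
  intro x hx
  have hx0 : (0:ℝ) ≤ x := le_of_lt hx.1
  have h1x : (0:ℝ) ≤ 1 - x := by linarith [hx.2]
  rw [Complex.ofReal_mul, Complex.ofReal_cpow hx0, Complex.ofReal_cpow h1x]
  push_cast
  ring

lemma beta_integrableOn (ha : 0 < a) (hb : 0 < b) :
    IntegrableOn (fun x : ℝ => x ^ (a - 1) * (1 - x) ^ (b - 1)) (Set.Ioc 0 1) := by
  have h := Complex.betaIntegral_convergent (u := (a:ℂ)) (v := (b:ℂ)) (by simpa) (by simpa)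
  rw [intervalIntegrable_iff_integrableOn_Ioc_of_le zero_le_one] at h
  have hre := h.re
  refine hre.congr ?_
  refine Filter.eventuallyEq_of_mem (self_mem_ae_restrict measurableSet_Ioc) (fun x hx => ?_)
  rw [complex_eq_real_on_Ioc x hx]
  simp

lemma beta_integral_value (ha : 0 < a) (hb : 0 < b) :
    ∫ x in Set.Ioo (0:ℝ) 1, x ^ (a - 1) * (1 - x) ^ (b - 1) =
      Real.Gamma a * Real.Gamma b / Real.Gamma (a + b) := by
  have hc := Complex.Gamma_mul_Gamma_eq_betaIntegral (s := (a:ℂ)) (t := (b:ℂ))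
      (by simpa) (by simpa)
  have hβ : Complex.betaIntegral a b
      = ((∫ x in Set.Ioo (0:ℝ) 1, x ^ (a - 1) * (1 - x) ^ (b - 1) : ℝ) : ℂ) := by
    rw [Complex.betaIntegral, intervalIntegral.integral_of_le zero_le_one]
    rw [setIntegral_congr_ae measurableSet_Ioc
        (Filter.Eventually.of_forall (fun x hx => complex_eq_real_on_Ioc x hx))]
    rw [MeasureTheory.integral_Ioc_eq_integral_Ioo]
    exact integral_ofReal
  rw [hβ, Complex.Gamma_ofReal, Complex.Gamma_ofReal] at hc
  rw [show ((a:ℂ) + b) = ((a + b : ℝ) : ℂ) by push_cast; ring, Complex.Gamma_ofReal] at hc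
  rw [← Complex.ofReal_mul, ← Complex.ofReal_mul] at hc
  have := Complex.ofReal_injective hc
  have hG : Real.Gamma (a + b) ≠ 0 := (Real.Gamma_pos_of_pos (by linarith)).ne'
  field_simp
  linarith [this]


variable {a b : ℝ}

lemma betaMeasure_univ (ha : 0 < a) (hb : 0 < b) : betaMeasure a b Set.univ = 1 := by
  have hC : 0 < Real.Gamma (a + b) / (Real.Gamma a * Real.Gamma b) := by
    apply div_pos (Real.Gamma_pos_of_pos (by linarith))
    exact mul_pos (Real.Gamma_pos_of_pos ha) (Real.Gamma_pos_of_pos hb)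
  rw [betaMeasure, withDensity_apply _ MeasurableSet.univ, Measure.restrict_univ]
  have hint : Integrable
      (fun x : ℝ => Real.Gamma (a + b) / (Real.Gamma a * Real.Gamma b)
        * x ^ (a - 1) * (1 - x) ^ (b - 1)) (volume.restrict (Set.Ioo 0 1)) := by
    have := ((beta_integrableOn ha hb).mono_set Set.Ioo_subset_Ioc_self).const_mul
      (Real.Gamma (a + b) / (Real.Gamma a * Real.Gamma b))
    simpa [mul_assoc] using this
  have hnn : 0 ≤ᵐ[volume.restrict (Set.Ioo (0:ℝ) 1)]
      (fun x : ℝ => Real.Gamma (a + b) / (Real.Gamma a * Real.Gamma b)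
        * x ^ (a - 1) * (1 - x) ^ (b - 1)) := by
    refine Filter.eventually_of_mem (self_mem_ae_restrict measurableSet_Ioo) (fun x hx => ?_)
    have h1 : (0:ℝ) ≤ x ^ (a-1) := Real.rpow_nonneg hx.1.le _
    have h2 : (0:ℝ) ≤ (1-x) ^ (b-1) := Real.rpow_nonneg (by linarith [hx.2]) _
    positivity
  rw [← MeasureTheory.ofReal_integral_eq_lintegral_ofReal hint hnn]
  have : ∫ x in Set.Ioo (0:ℝ) 1, Real.Gamma (a + b) / (Real.Gamma a * Real.Gamma b)
        * x ^ (a - 1) * (1 - x) ^ (b - 1) = 1 := by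
    simp_rw [mul_assoc]
    rw [MeasureTheory.integral_const_mul, beta_integral_value ha hb]
    field_simp
  rw [this, ENNReal.ofReal_one]

lemma isProbability_betaMeasure (ha : 0 < a) (hb : 0 < b) :
    IsProbabilityMeasure (betaMeasure a b) := ⟨betaMeasure_univ ha hb⟩

lemma betaMeasure_compl_Ioo (a b : ℝ) : betaMeasure a b (Set.Ioo (0:ℝ) 1)ᶜ = 0 := by
  rw [betaMeasure, withDensity_apply _ measurableSet_Ioo.compl,
    Measure.restrict_restrict measurableSet_Ioo.compl, Set.compl_inter_self,
    Measure.restrict_empty, lintegral_zero_measure]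

lemma measurable_rpow_const (c : ℝ) : Measurable fun x : ℝ => x ^ c :=
  measurable_of_continuousOn_compl_singleton 0 (continuousOn_of_forall_continuousAt
    fun x hx => Real.continuousAt_rpow_const x c (Or.inl hx))

lemma betaMeasure_density_measurable (a b : ℝ) :
    Measurable (fun x : ℝ => ENNReal.ofReal
      (Real.Gamma (a + b) / (Real.Gamma a * Real.Gamma b) * x ^ (a - 1) * (1 - x) ^ (b - 1))) := by
  apply ENNReal.measurable_ofReal.comp
  exact (((measurable_rpow_const (a-1)).const_mul _).mul
    ((measurable_rpow_const (b-1)).comp (measurable_const.sub measurable_id)))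

lemma betaMeasure_withDensity (ha : 0 < a) (hb : 0 < b) :
    (betaMeasure a b).withDensity (fun x => ENNReal.ofReal (1 - x)) =
      ENNReal.ofReal (b / (a + b)) • betaMeasure a (b + 1) := by
  rw [betaMeasure, betaMeasure,
    ← withDensity_mul _ (betaMeasure_density_measurable a b)
      (show Measurable fun x : ℝ => ENNReal.ofReal (1 - x) from
        (measurable_const.sub measurable_id).ennreal_ofReal),
    ← withDensity_smul _ (betaMeasure_density_measurable a (b + 1))]
  apply withDensity_congr_ae
  refine Filter.eventuallyEq_of_mem (self_mem_ae_restrict measurableSet_Ioo) (fun x hx => ?_)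
  have hx0 : (0:ℝ) < x := hx.1
  have h1x : (0:ℝ) < 1 - x := by simp only [Set.mem_Ioo] at hx; linarith [hx.2]
  have hab : (0:ℝ) < a + b := by linarith
  have hGa := Real.Gamma_pos_of_pos ha
  have hGb := Real.Gamma_pos_of_pos hb
  have hGab := Real.Gamma_pos_of_pos hab
  simp only [Pi.mul_apply, Pi.smul_apply, smul_eq_mul]
  have hd : (0:ℝ) ≤ Real.Gamma (a + b) / (Real.Gamma a * Real.Gamma b) * x ^ (a - 1)
      * (1 - x) ^ (b - 1) := by
    have h1 : (0:ℝ) ≤ x ^ (a-1) := Real.rpow_nonneg hx0.le _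
    have h2 : (0:ℝ) ≤ (1-x) ^ (b-1) := Real.rpow_nonneg h1x.le _
    positivity
  rw [← ENNReal.ofReal_mul hd, ← ENNReal.ofReal_mul (by positivity)]
  congr 1
  have hpow : (1 - x) ^ (b + 1 - 1) = (1 - x) ^ (b - 1) * (1 - x) := by
    rw [show b + 1 - 1 = (b - 1) + 1 by ring, Real.rpow_add h1x, Real.rpow_one]
  have hG1 : Real.Gamma (a + (b + 1)) = (a + b) * Real.Gamma (a + b) := by
    rw [show a + (b + 1) = (a + b) + 1 by ring, Real.Gamma_add_one hab.ne']
  have hG2 : Real.Gamma (b + 1) = b * Real.Gamma b := Real.Gamma_add_one hb.ne'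
  rw [hpow, hG1, hG2]
  field_simp

lemma lintegral_pi_fin {n : ℕ} (μ : Fin n → Measure ℝ) [∀ i, IsProbabilityMeasure (μ i)]
    (g : Fin n → ℝ → ℝ≥0∞) (hg : ∀ i, Measurable (g i)) :
    ∫⁻ x, ∏ i, g i (x i) ∂Measure.pi μ = ∏ i, ∫⁻ x, g i x ∂μ i := by
  induction n with
  | zero => simp
  | succ n ih =>
      have hmp := (MeasureTheory.measurePreserving_piFinSuccAbove μ 0).symm
      have hF : Measurable fun x : Fin (n+1) → ℝ => ∏ i, g i (x i) :=
        Finset.measurable_prod _ (fun i _ => (hg i).comp (measurable_pi_apply i))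
      rw [← hmp.lintegral_comp hF]
      have heq : ∀ y : ℝ × (Fin n → ℝ),
          (∏ i, g i (((MeasurableEquiv.piFinSuccAbove (fun _ => ℝ) 0).symm y) i))
            = g 0 y.1 * ∏ i : Fin n, g i.succ (y.2 i) := by
        intro y
        rw [Fin.prod_univ_succ]
        simp [MeasurableEquiv.piFinSuccAbove_symm_apply, Fin.zero_succAbove]
      simp_rw [heq]
      have hGm : Measurable fun v : Fin n → ℝ => ∏ i, g i.succ (v i) :=
        Finset.measurable_prod _ (fun i _ => (hg i.succ).comp (measurable_pi_apply i))
      simp only [Fin.zero_succAbove]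
      have key : ∫⁻ (a : ℝ × (Fin n → ℝ)), g 0 a.1 * ∏ i : Fin n, g i.succ (a.2 i)
          ∂(μ 0).prod (Measure.pi fun j => μ j.succ)
          = (∫⁻ x, g 0 x ∂μ 0) * ∫⁻ v, ∏ i : Fin n, g i.succ (v i)
              ∂Measure.pi fun j => μ j.succ :=
        MeasureTheory.lintegral_prod_mul (hg 0).aemeasurable hGm.aemeasurable
      rw [key, ih (fun i => μ i.succ) (fun i => g i.succ) (fun i => hg i.succ),
        Fin.prod_univ_succ]

lemma lintegral_pi_fintype {ι : Type*} [Fintype ι] (μ : ι → Measure ℝ)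
    [∀ i, IsProbabilityMeasure (μ i)] (g : ι → ℝ → ℝ≥0∞) (hg : ∀ i, Measurable (g i)) :
    ∫⁻ x, ∏ i, g i (x i) ∂Measure.pi μ = ∏ i, ∫⁻ x, g i x ∂μ i := by
  classical
  let e : Fin (Fintype.card ι) ≃ ι := (Fintype.equivFin ι).symm
  have hmp := MeasureTheory.measurePreserving_piCongrLeft μ e
  have hF : Measurable fun x : ι → ℝ => ∏ i, g i (x i) :=
    Finset.measurable_prod _ (fun i _ => (hg i).comp (measurable_pi_apply i))
  rw [← hmp.lintegral_comp hF]
  have heq : ∀ y : Fin (Fintype.card ι) → ℝ,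
      (∏ i, g i ((MeasurableEquiv.piCongrLeft (fun _ : ι => ℝ) e) y i))
        = ∏ j, g (e j) (y j) := by
    intro y
    rw [← e.prod_comp (fun i => g i ((MeasurableEquiv.piCongrLeft (fun _ : ι => ℝ) e) y i))]
    refine Finset.prod_congr rfl fun j _ => ?_
    congr 1
    rw [MeasurableEquiv.coe_piCongrLeft]
    exact Equiv.piCongrLeft_apply_apply (fun _ : ι => ℝ) e y j
  simp_rw [heq]
  rw [lintegral_pi_fin (fun j => μ (e j)) (fun j => g (e j)) (fun j => hg (e j)),
    e.prod_comp (fun i => ∫⁻ x, g i x ∂μ i)]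

lemma key_lintegral (a b : ℕ+ → ℝ) (ha : ∀ k, 0 < a k) (hb : ∀ k, 0 < b k)
    (Q : Measure (ℕ+ → ℝ)) [IsProbabilityMeasure Q]
    (hQ : ∀ (J : Finset ℕ+) (B : ℕ+ → Set ℝ), (∀ k, MeasurableSet (B k)) →
      Q {u | ∀ k ∈ J, u k ∈ B k} = ∏ k ∈ J, betaMeasure (a k) (b k) (B k))
    (J : Finset ℕ+) (g : ℕ+ → ℝ → ℝ≥0∞) (hg : ∀ k, Measurable (g k)) :
    ∫⁻ u, ∏ k ∈ J, g k (u k) ∂Q = ∏ k ∈ J, ∫⁻ x, g k x ∂betaMeasure (a k) (b k) := by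
  classical
  haveI : ∀ k : ℕ+, IsProbabilityMeasure (betaMeasure (a k) (b k)) :=
    fun k => isProbability_betaMeasure (ha k) (hb k)
  set π : (ℕ+ → ℝ) → ({k // k ∈ J} → ℝ) := fun u k => u k with hπdef
  have hπ : Measurable π := measurable_pi_lambda _ fun k => measurable_pi_apply _
  have hmap : Measure.pi (fun k : {k // k ∈ J} => betaMeasure (a k) (b k)) = Q.map π := by
    refine Measure.pi_eq fun s hs => ?_
    rw [Measure.map_apply hπ (MeasurableSet.univ_pi hs)]
    have hpre : π ⁻¹' Set.univ.pi s =
        {u | ∀ k ∈ J, u k ∈ (if h : k ∈ J then s ⟨k, h⟩ else Set.univ)} := by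
      ext u
      simp only [Set.mem_preimage, Set.mem_pi, Set.mem_univ, forall_true_left, Set.mem_setOf_eq]
      constructor
      · intro h k hk; rw [dif_pos hk]; exact h ⟨k, hk⟩
      · intro h k; have := h k.1 k.2; rwa [dif_pos k.2] at this
    rw [hpre, hQ J _ (fun k => by by_cases h : k ∈ J <;> simp [h, hs])]
    rw [← Finset.prod_coe_sort J (fun k => betaMeasure (a k) (b k)
      (if h : k ∈ J then s ⟨k, h⟩ else Set.univ))]
    exact Finset.prod_congr rfl fun k _ => by rw [dif_pos k.2]
  have hstep : ∫⁻ u, ∏ k ∈ J, g k (u k) ∂Q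
      = ∫⁻ u, (fun v : {k // k ∈ J} → ℝ => ∏ k : {k // k ∈ J}, g k (v k)) (π u) ∂Q := by
    refine lintegral_congr fun u => ?_
    show ∏ k ∈ J, g k (u k) = ∏ k : {k // k ∈ J}, g k (u k)
    exact (Finset.prod_coe_sort J (fun k => g k (u k))).symm
  have hFm : Measurable fun v : {k // k ∈ J} → ℝ => ∏ k : {k // k ∈ J}, g k (v k) :=
    Finset.measurable_prod _ fun k _ => (hg k).comp (measurable_pi_apply k)
  rw [hstep, ← lintegral_map hFm hπ, ← hmap,
    lintegral_pi_fintype _ _ (fun k : {k // k ∈ J} => hg k),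
    Finset.prod_coe_sort J (fun k => ∫⁻ x, g k x ∂betaMeasure (a k) (b k))]

lemma ae_coords (a b : ℕ+ → ℝ)
    (Q : Measure (ℕ+ → ℝ)) [IsProbabilityMeasure Q]
    (hQ : ∀ (J : Finset ℕ+) (B : ℕ+ → Set ℝ), (∀ k, MeasurableSet (B k)) →
      Q {u | ∀ k ∈ J, u k ∈ B k} = ∏ k ∈ J, betaMeasure (a k) (b k) (B k))
    (T : Finset ℕ+) :
    ∀ᵐ u ∂Q, ∀ k ∈ T, u k ∈ Set.Ioo (0:ℝ) 1 := by
  have h1 : ∀ k : ℕ+, ∀ᵐ u ∂Q, u k ∈ Set.Ioo (0:ℝ) 1 := by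
    intro k
    rw [ae_iff]
    have h0 : Q {u : ℕ+ → ℝ | ∀ j ∈ ({k} : Finset ℕ+), u j ∈ (Set.Ioo (0:ℝ) 1)ᶜ} = 0 := by
      rw [hQ {k} (fun _ => (Set.Ioo (0:ℝ) 1)ᶜ) (fun _ => measurableSet_Ioo.compl)]
      simp [betaMeasure_compl_Ioo]
    refine measure_mono_null (fun u hu => ?_) h0
    simp only [Set.mem_setOf_eq, Finset.mem_singleton]
    intro j hj; subst hj; exact hu
  have := (MeasureTheory.ae_ball_iff (T : Set ℕ+).to_countable).mpr
    (fun k (_ : k ∈ (T : Set ℕ+)) => h1 k)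
  filter_upwards [this] with u hu k hk
  exact hu k hk

lemma cylinder_lintegral (a b : ℕ+ → ℝ) (ha : ∀ k, 0 < a k) (hb : ∀ k, 0 < b k)
    (Q : Measure (ℕ+ → ℝ)) [IsProbabilityMeasure Q]
    (hQ : ∀ (J : Finset ℕ+) (B : ℕ+ → Set ℝ), (∀ k, MeasurableSet (B k)) →
      Q {u | ∀ k ∈ J, u k ∈ B k} = ∏ k ∈ J, betaMeasure (a k) (b k) (B k))
    (tstar : ℕ) (J : Finset ℕ+) (B : ℕ+ → Set ℝ) (hB : ∀ k, MeasurableSet (B k)) :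
    ∫⁻ u, Set.indicator {u : ℕ+ → ℝ | ∀ k ∈ J, u k ∈ B k}
        (fun u => ENNReal.ofReal (∏ k ∈ Finset.range tstar, (1 - u k.succPNat))) u ∂Q
      = (∏ k ∈ (Finset.range tstar).image Nat.succPNat,
            ENNReal.ofReal (b k / (a k + b k)))
        * ∏ k ∈ J, betaMeasure (a k) (b k + if (k : ℕ) ≤ tstar then 1 else 0) (B k) := by
  classical
  set T : Finset ℕ+ := (Finset.range tstar).image Nat.succPNat with hTdef
  have hmemT : ∀ k : ℕ+, k ∈ T ↔ (k : ℕ) ≤ tstar := by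
    intro k
    simp only [hTdef, Finset.mem_image, Finset.mem_range]
    constructor
    · rintro ⟨i, hi, rfl⟩
      rw [Nat.succPNat_coe]; omega
    · intro h
      refine ⟨k.natPred, ?_, PNat.succPNat_natPred k⟩
      have h1 : 1 ≤ (k : ℕ) := k.one_le
      have h2 : k.natPred = (k : ℕ) - 1 := rfl
      omega
  haveI hPB' : ∀ k : ℕ+, IsProbabilityMeasure
      (betaMeasure (a k) (b k + if (k : ℕ) ≤ tstar then 1 else 0)) := by
    intro k
    refine isProbability_betaMeasure (ha k) ?_
    split_ifs
    · linarith [hb k]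
    · simpa using hb k
  set J' : Finset ℕ+ := J ∪ T with hJ'def
  set B' : ℕ+ → Set ℝ := fun k => if k ∈ J then B k else Set.univ with hB'def
  have hB'meas : ∀ k, MeasurableSet (B' k) := fun k => by
    rw [hB'def]; dsimp only; split_ifs; exacts [hB k, MeasurableSet.univ]
  set g : ℕ+ → ℝ → ℝ≥0∞ := fun k => Set.indicator (B' k)
      (fun x => if k ∈ T then ENNReal.ofReal (1 - x) else 1) with hgdef
  have hgm : ∀ k, Measurable (g k) := by
    intro k
    refine Measurable.indicator ?_ (hB'meas k)
    split_ifs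
    exacts [(measurable_const.sub measurable_id).ennreal_ofReal, measurable_const]
  have hTJ' : T ⊆ J' := Finset.subset_union_right
  have hae := ae_coords a b Q hQ T
  have hptw : ∀ᵐ u ∂Q, Set.indicator {u : ℕ+ → ℝ | ∀ k ∈ J, u k ∈ B k}
      (fun u => ENNReal.ofReal (∏ k ∈ Finset.range tstar, (1 - u k.succPNat))) u
        = ∏ k ∈ J', g k (u k) := by
    filter_upwards [hae] with u hu
    have hLT : (∏ k ∈ Finset.range tstar, (1 - u k.succPNat)) = ∏ k ∈ T, (1 - u k) := by
      rw [hTdef]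
      exact (Finset.prod_image (f := fun k : ℕ+ => (1 : ℝ) - u k)
        (fun i _ j _ h => Nat.succPNat_injective h)).symm
    by_cases hc : u ∈ {u : ℕ+ → ℝ | ∀ k ∈ J, u k ∈ B k}
    · rw [Set.indicator_of_mem hc]
      have hmem : ∀ k ∈ J', u k ∈ B' k := by
        intro k hk
        rw [hB'def]; dsimp only
        by_cases h : k ∈ J
        · rw [if_pos h]; exact hc k h
        · rw [if_neg h]; trivial
      have hgval : ∀ k ∈ J', g k (u k)
          = (if k ∈ T then ENNReal.ofReal (1 - u k) else 1) := fun k hk => by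
        rw [hgdef]; exact Set.indicator_of_mem (hmem k hk) _
      rw [Finset.prod_congr rfl hgval, Finset.prod_ite_mem,
        Finset.inter_eq_right.mpr hTJ', hLT,
        ENNReal.ofReal_prod_of_nonneg (fun k hk => by have := (hu k hk).2; linarith)]
    · rw [Set.indicator_of_notMem hc]
      have hex : ∃ k ∈ J, u k ∉ B k := by
        simpa [Set.mem_setOf_eq, not_forall] using hc
      obtain ⟨k, hkJ, hkB⟩ := hex
      refine (Finset.prod_eq_zero (Finset.mem_union_left _ hkJ) ?_).symm
      rw [hgdef]
      have hnot : u k ∉ B' k := by rw [hB'def]; dsimp only; rw [if_pos hkJ]; exact hkB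
      exact Set.indicator_of_notMem hnot _
  rw [lintegral_congr_ae hptw, key_lintegral a b ha hb Q hQ J' g hgm]
  have hval : ∀ k ∈ J', ∫⁻ x, g k x ∂betaMeasure (a k) (b k)
      = (if k ∈ T then ENNReal.ofReal (b k / (a k + b k)) else 1)
        * betaMeasure (a k) (b k + if (k : ℕ) ≤ tstar then 1 else 0) (B' k) := by
    intro k hk
    rw [hgdef]; dsimp only
    rw [lintegral_indicator (hB'meas k)]
    by_cases hkT : k ∈ T
    · simp only [if_pos hkT, if_pos ((hmemT k).mp hkT)]
      rw [← withDensity_apply _ (hB'meas k), betaMeasure_withDensity (ha k) (hb k),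
        Measure.smul_apply, smul_eq_mul]
    · simp only [if_neg hkT, if_neg (fun h => hkT ((hmemT k).mpr h))]
      rw [setLIntegral_one, add_zero, one_mul]
  rw [Finset.prod_congr rfl hval, Finset.prod_mul_distrib, Finset.prod_ite_mem,
    Finset.inter_eq_right.mpr hTJ']
  congr 1
  rw [← Finset.prod_subset (Finset.subset_union_left : J ⊆ J') (fun k _ hkJ => by
    rw [hB'def]; dsimp only; rw [if_neg hkJ]; exact measure_univ)]
  refine Finset.prod_congr rfl fun k hk => by rw [hB'def]; dsimp only; rw [if_pos hk]

lemma cyl_measurable (J : Finset ℕ+) (B : ℕ+ → Set ℝ) (hB : ∀ k, MeasurableSet (B k)) :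
    MeasurableSet {u : ℕ+ → ℝ | ∀ k ∈ J, u k ∈ B k} := by
  have : {u : ℕ+ → ℝ | ∀ k ∈ J, u k ∈ B k} = ⋂ k ∈ J, (fun u : ℕ+ → ℝ => u k) ⁻¹' (B k) := by
    ext u; simp
  rw [this]
  exact MeasurableSet.biInter J.countable_toSet (fun k _ => measurable_pi_apply k (hB k))

lemma cyl_pisystem : IsPiSystem {A : Set (ℕ+ → ℝ) | ∃ (J : Finset ℕ+) (B : ℕ+ → Set ℝ),
    (∀ k, MeasurableSet (B k)) ∧ A = {u | ∀ k ∈ J, u k ∈ B k}} := by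
  classical
  rintro A ⟨J, B, hB, rfl⟩ A' ⟨J', B', hB', rfl⟩ -
  refine ⟨J ∪ J', fun k => (if k ∈ J then B k else Set.univ) ∩
      (if k ∈ J' then B' k else Set.univ), fun k => ?_, ?_⟩
  · exact MeasurableSet.inter (by split_ifs; exacts [hB k, MeasurableSet.univ])
      (by split_ifs; exacts [hB' k, MeasurableSet.univ])
  · ext u
    simp only [Set.mem_inter_iff, Set.mem_setOf_eq]
    constructor
    · rintro ⟨h1, h2⟩ k hk
      constructor
      · split_ifs with h; exacts [h1 k h, Set.mem_univ _]
      · split_ifs with h; exacts [h2 k h, Set.mem_univ _]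
    · intro h
      constructor
      · intro k hk; have := (h k (Finset.mem_union_left _ hk)).1; rwa [if_pos hk] at this
      · intro k hk; have := (h k (Finset.mem_union_right _ hk)).2; rwa [if_pos hk] at this

lemma cyl_generate :
    (inferInstance : MeasurableSpace (ℕ+ → ℝ)) = MeasurableSpace.generateFrom
      {A : Set (ℕ+ → ℝ) | ∃ (J : Finset ℕ+) (B : ℕ+ → Set ℝ),
        (∀ k, MeasurableSet (B k)) ∧ A = {u | ∀ k ∈ J, u k ∈ B k}} := by
  apply le_antisymm
  · refine iSup_le fun k => ?_
    refine measurable_iff_comap_le.mp ?_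
    intro t ht
    refine MeasurableSpace.measurableSet_generateFrom ⟨{k}, fun _ => t, fun _ => ht, ?_⟩
    ext u; simp
  · refine MeasurableSpace.generateFrom_le ?_
    rintro A ⟨J, B, hB, rfl⟩
    exact cyl_measurable J B hB

/-- **conjugacy for a censored observation.**  With likelihood
`L(u) = ∏_{k=1}^{t*} (1 - u_k)`, the normalizing constant `Z = ∫ L dΠ_{c,F0}` is in
`(0,∞)` and `Π_{c,F0}` weighted by the density `L` equals `Z ⬝ Π'`, where `Π'` is the
product of the updated Beta distributions
`Beta(c(s)F0({s}), c(s)F0((s,∞)) + 1{s ≤ t*})`: the posterior of a beta-Stacy process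
given one observation censored at `t*` is again a beta-Stacy process with the stated
updated parameters. -/
theorem betaStacy_posterior_censored
    (c : ℕ+ → ℝ) (hc : ∀ s, 0 < c s)
    (F0 : ℕ+ → ℝ) (hF0 : ∀ s, 0 < F0 s) (hF0sum : ∑' s, F0 s = 1)
    (Q : Measure (ℕ+ → ℝ)) [IsProbabilityMeasure Q]
    (hQ : ∀ (J : Finset ℕ+) (B : ℕ+ → Set ℝ), (∀ k, MeasurableSet (B k)) →
      Q {u | ∀ k ∈ J, u k ∈ B k} =
        ∏ k ∈ J, betaMeasure (c k * F0 k) (c k * survF0 F0 k) (B k))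
    (tstar : ℕ) (htstar : 1 ≤ tstar) :
    0 < (∫ u, ∏ k ∈ Finset.range tstar, (1 - u k.succPNat) ∂Q) ∧
    ∀ (Q' : Measure (ℕ+ → ℝ)), IsProbabilityMeasure Q' →
      (∀ (J : Finset ℕ+) (B : ℕ+ → Set ℝ), (∀ k, MeasurableSet (B k)) →
        Q' {u | ∀ k ∈ J, u k ∈ B k} =
          ∏ k ∈ J, betaMeasure (c k * F0 k)
            (c k * survF0 F0 k + if (k : ℕ) ≤ tstar then 1 else 0) (B k)) →
      Q.withDensity
          (fun u => ENNReal.ofReal (∏ k ∈ Finset.range tstar, (1 - u k.succPNat))) =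
        ENNReal.ofReal (∫ u, ∏ k ∈ Finset.range tstar, (1 - u k.succPNat) ∂Q) • Q' := by
  classical
  have hsummable : Summable F0 := by
    by_contra h
    rw [tsum_eq_zero_of_not_summable h] at hF0sum
    norm_num at hF0sum
  have hsurv : ∀ t : ℕ, 0 < survF0 F0 t := by
    intro t
    rw [survF0]
    have hnn : ∀ s : ℕ+, 0 ≤ (if t < (s : ℕ) then F0 s else 0) := by
      intro s; split_ifs; exacts [(hF0 s).le, le_rfl]
    have hs : Summable (fun s : ℕ+ => if t < (s : ℕ) then F0 s else 0) := by
      refine Summable.of_nonneg_of_le hnn (fun s => ?_) hsummable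
      split_ifs; exacts [le_rfl, (hF0 s).le]
    refine Summable.tsum_pos hs hnn ⟨t + 1, Nat.succ_pos t⟩ ?_
    rw [if_pos (by exact Nat.lt_succ_self t)]
    exact hF0 _
  have hA : ∀ k : ℕ+, 0 < c k * F0 k := fun k => mul_pos (hc k) (hF0 k)
  have hBpos : ∀ k : ℕ+, 0 < c k * survF0 F0 k := fun k => mul_pos (hc k) (hsurv k)
  have hZrpos : 0 < ∏ k ∈ (Finset.range tstar).image Nat.succPNat,
      (c k * survF0 F0 k) / (c k * F0 k + c k * survF0 F0 k) :=
    Finset.prod_pos fun k _ => div_pos (hBpos k) (by linarith [hA k, hBpos k])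
  have hW : (∏ k ∈ (Finset.range tstar).image Nat.succPNat,
        ENNReal.ofReal ((c k * survF0 F0 k) / (c k * F0 k + c k * survF0 F0 k)))
      = ENNReal.ofReal (∏ k ∈ (Finset.range tstar).image Nat.succPNat,
        (c k * survF0 F0 k) / (c k * F0 k + c k * survF0 F0 k)) :=
    (ENNReal.ofReal_prod_of_nonneg fun k _ =>
      (div_pos (hBpos k) (by linarith [hA k, hBpos k])).le).symm
  have hLuniv := cylinder_lintegral (fun k => c k * F0 k) (fun k => c k * survF0 F0 k)
    hA hBpos Q hQ tstar ∅ (fun _ => Set.univ) (fun _ => MeasurableSet.univ)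
  rw [show {u : ℕ+ → ℝ | ∀ k ∈ (∅ : Finset ℕ+), u k ∈ Set.univ} = Set.univ from
      by ext u; simp, Finset.prod_empty, mul_one, Set.indicator_univ] at hLuniv
  have hLmeas : Measurable fun u : ℕ+ → ℝ => ∏ k ∈ Finset.range tstar, (1 - u k.succPNat) :=
    Finset.measurable_prod _ fun k _ => measurable_const.sub (measurable_pi_apply _)
  have haeL : 0 ≤ᵐ[Q] fun u : ℕ+ → ℝ => ∏ k ∈ Finset.range tstar, (1 - u k.succPNat) := by
    filter_upwards [ae_coords (fun k => c k * F0 k) (fun k => c k * survF0 F0 k) Q hQ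
      ((Finset.range tstar).image Nat.succPNat)] with u hu
    refine Finset.prod_nonneg fun k hk => ?_
    have h2 := hu k.succPNat (Finset.mem_image_of_mem _ hk)
    linarith [h2.2]
  have hZ : ∫ u, ∏ k ∈ Finset.range tstar, (1 - u k.succPNat) ∂Q
      = ∏ k ∈ (Finset.range tstar).image Nat.succPNat,
        (c k * survF0 F0 k) / (c k * F0 k + c k * survF0 F0 k) := by
    rw [MeasureTheory.integral_eq_lintegral_of_nonneg_ae haeL hLmeas.aestronglyMeasurable,
      hLuniv, hW, ENNReal.toReal_ofReal hZrpos.le]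
  refine ⟨by rw [hZ]; exact hZrpos, ?_⟩
  intro Q' hQ'prob hQ'
  haveI : IsFiniteMeasure (Q.withDensity
      (fun u => ENNReal.ofReal (∏ k ∈ Finset.range tstar, (1 - u k.succPNat)))) := by
    constructor
    rw [withDensity_apply _ MeasurableSet.univ, Measure.restrict_univ, hLuniv, hW]
    exact ENNReal.ofReal_lt_top
  refine MeasureTheory.ext_of_generate_finite _ cyl_generate cyl_pisystem ?_ ?_
  · rintro A ⟨J, B, hB, rfl⟩
    rw [withDensity_apply _ (cyl_measurable J B hB),
      ← lintegral_indicator (cyl_measurable J B hB),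
      cylinder_lintegral (fun k => c k * F0 k) (fun k => c k * survF0 F0 k)
        hA hBpos Q hQ tstar J B hB,
      Measure.smul_apply, smul_eq_mul, hQ' J B hB, hZ, hW]
  · rw [withDensity_apply _ MeasurableSet.univ, Measure.restrict_univ, hLuniv, hW,
      Measure.smul_apply, smul_eq_mul, measure_univ, mul_one, hZ]
end

section
/- Fix n ≥ 1 and x_1, …, x_n ∈ ℕ₊; let n_t = #{i ≤ n : x_i = t} and n_{>t} = #{i ≤ n : x_i > t}, and define the likelihood L(w) = ∏_{i=1}^n P_w({x_i}) = ∏_{t≥1} w_t^{n_t}(1 − w_t)^{n_{>t}}. Then Z := ∫ L dΛ_m ∈ (0,∞) and the measure Λ_m weighted by the density L equals Z · Λ_{m_*}, where m_* is the measure on ℕ₊ with m_*({t}) = m({t}) + n_t. That is, the posterior of a Dirichlet process Dir(m) given an i.i.d. sample X_1, …, X_n is the Dirichlet process Dir(m_*). -/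
open MeasureTheory

/-- `m((t,∞)) = ∑_{s > t} m({s})`. -/
noncomputable def survMass (m : ℕ+ → ℝ) (t : ℕ) : ℝ :=
  ∑' s : ℕ+, if t < (s : ℕ) then m s else 0

/-- Stick-breaking weights `P_w({t}) = w_t ∏_{k=1}^{t-1} (1 - w_k)`. -/
noncomputable def stickWeight (w : ℕ+ → ℝ) (t : ℕ+) : ℝ :=
  w t * ∏ k ∈ Finset.range ((t : ℕ) - 1), (1 - w k.succPNat)

open Set ENNReal
open scoped Finset

section InfinitePi

variable {ι : Type*} {X : ι → Type*} [∀ i, MeasurableSpace (X i)]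
  {μ : ∀ i, Measure (X i)} [∀ i, IsProbabilityMeasure (μ i)]

theorem ae_forall_infinitePi [Countable ι] {p : ∀ i, X i → Prop}
    (h : ∀ i, ∀ᵐ x ∂μ i, p i x) : ∀ᵐ w ∂Measure.infinitePi μ, ∀ i, p i (w i) := by
  refine ae_all_iff.2 fun i => ae_of_ae_map (measurable_pi_apply i).aemeasurable ?_
  rw [Measure.infinitePi_map_eval]
  exact h i

theorem lintegral_prod_infinitePi (s : Finset ι) {f : ∀ i, X i → ℝ≥0∞}
    (hf : ∀ i, Measurable (f i)) :
    ∫⁻ w, ∏ i ∈ s, f i (w i) ∂Measure.infinitePi μ = ∏ i ∈ s, ∫⁻ x, f i x ∂μ i := by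
  rw [ProbabilityTheory.lintegral_prod_eq_prod_lintegral_of_indepFun s _
    (ProbabilityTheory.iIndepFun_infinitePi hf) fun i => (hf i).comp (measurable_pi_apply i)]
  refine Finset.prod_congr rfl fun i _ => ?_
  rw [← lintegral_map (hf i) (measurable_pi_apply i), Measure.infinitePi_map_eval]

theorem withDensity_prod_infinitePi {ν : ∀ i, Measure (X i)} [∀ i, IsProbabilityMeasure (ν i)]
    {g : ∀ i, X i → ℝ≥0∞} (hg : ∀ i, Measurable (g i)) {c : ι → ℝ≥0∞} (hc : ∀ i, c i ≠ ∞)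
    (hgν : ∀ i, (μ i).withDensity (g i) = c i • ν i) {K : Finset ι} (hK : ∀ i ∉ K, g i = 1) :
    (Measure.infinitePi μ).withDensity (fun w => ∏ i ∈ K, g i (w i)) =
      (∏ i ∈ K, c i) • Measure.infinitePi ν := by
  classical
  have hc_one : ∀ i ∉ K, c i = 1 := fun i hi => by
    simpa [hK i hi] using (congrArg (· univ) (hgν i)).symm
  have hbox : ∀ (s : Finset ι) (t : ∀ i, Set (X i)), (∀ i, MeasurableSet (t i)) → K ⊆ s →
      (Measure.infinitePi μ).withDensity (fun w => ∏ i ∈ K, g i (w i)) ((s : Set ι).pi t) =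
        ((∏ i ∈ K, c i) • Measure.infinitePi ν) ((s : Set ι).pi t) := by
    intro s t ht hKs
    have hdensity : ((s : Set ι).pi t).indicator (fun w => ∏ i ∈ K, g i (w i)) =
        fun w => ∏ i ∈ s, (t i).indicator (g i) (w i) := by
      ext w
      by_cases hw : w ∈ (s : Set ι).pi t
      · rw [indicator_of_mem hw, Finset.prod_subset hKs fun i _ hi => by simp [hK i hi]]
        exact Finset.prod_congr rfl fun i hi => (indicator_of_mem (hw i hi) _).symm
      · obtain ⟨i, hi, hwi⟩ := by simpa [Set.mem_pi] using hw
        rw [indicator_of_notMem hw, Finset.prod_eq_zero hi (indicator_of_notMem hwi _)]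
    rw [withDensity_apply _ (.pi s.countable_toSet fun i _ => ht i), ← lintegral_indicator
      (.pi s.countable_toSet fun i _ => ht i), hdensity,
      lintegral_prod_infinitePi s fun i => (hg i).indicator (ht i), Measure.smul_apply,
      smul_eq_mul, Measure.infinitePi_pi _ fun i _ => ht i,
      Finset.prod_subset hKs fun i _ hi => hc_one i hi, ← Finset.prod_mul_distrib]
    refine Finset.prod_congr rfl fun i _ => ?_
    rw [lintegral_indicator (ht i), ← withDensity_apply _ (ht i), hgν, Measure.smul_apply,
      smul_eq_mul]
  have := Measure.smul_finite (Measure.infinitePi ν) (ENNReal.prod_ne_top (s := K) fun i _ => hc i)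
  refine (ext_of_generate_finite _ generateFrom_squareCylinders.symm
    (isPiSystem_squareCylinders (fun _ => MeasurableSpace.isPiSystem_measurableSet)
      fun _ => .univ) ?_ ?_).symm
  · rintro _ ⟨s, t, ht, rfl⟩
    have hpi : (s : Set ι).pi t =
        ((s ∪ K : Finset ι) : Set ι).pi fun i => if i ∈ s then t i else univ := by
      ext w; simp only [Set.mem_pi, Finset.coe_union, Set.mem_union, Finset.mem_coe]; grind
    rw [hpi]
    exact (hbox _ _ (fun i => by split_ifs; exacts [ht i trivial, .univ])
      Finset.subset_union_right).symm
  · simpa using (hbox K (fun _ => univ) (fun _ => .univ) subset_rfl).symm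

end InfinitePi

theorem integral_eq_of_withDensity_ofReal_eq_smul {α : Type*} [MeasurableSpace α]
    {μ ν : Measure α} [IsProbabilityMeasure ν] {f : α → ℝ} (hf_nonneg : 0 ≤ᵐ[μ] f)
    (hf : AEStronglyMeasurable f μ) {C : ℝ} (hC : 0 ≤ C)
    (h : μ.withDensity (fun x => ENNReal.ofReal (f x)) = ENNReal.ofReal C • ν) :
    ∫ x, f x ∂μ = C := by
  rw [integral_eq_lintegral_of_nonneg_ae hf_nonneg hf, ← setLIntegral_univ,
    ← withDensity_apply _ .univ, h]
  simp [hC]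

theorem betaMeasure_eq (a b : ℝ) : betaMeasure a b = ProbabilityTheory.betaMeasure a b := by
  rw [ProbabilityTheory.betaMeasure, betaMeasure, ← withDensity_indicator measurableSet_Ioo]
  congr 1
  ext x
  by_cases hx : x ∈ Ioo 0 1
  · rw [indicator_of_mem hx, ProbabilityTheory.betaPDF_of_pos_lt_one hx.1 hx.2,
      ProbabilityTheory.beta, one_div_div]
  · rw [indicator_of_notMem hx, ProbabilityTheory.betaPDF_eq,
      if_neg (show ¬(0 < x ∧ x < 1) from hx), ofReal_zero]

theorem isProbabilityMeasure_betaMeasure {a b : ℝ} (ha : 0 < a) (hb : 0 < b) :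
    IsProbabilityMeasure (betaMeasure a b) :=
  betaMeasure_eq a b ▸ ProbabilityTheory.isProbabilityMeasureBeta ha hb

theorem ae_mem_Ioo_betaMeasure (a b : ℝ) : ∀ᵐ x ∂betaMeasure a b, x ∈ Ioo 0 1 :=
  (withDensity_absolutelyContinuous _ _).ae_le (ae_restrict_mem measurableSet_Ioo)

theorem betaMeasure_withDensity_pow_mul_pow {a b : ℝ} (ha : 0 < a) (hb : 0 < b) (p q : ℕ) :
    (betaMeasure a b).withDensity (fun x => ENNReal.ofReal (x ^ p * (1 - x) ^ q)) =
      ENNReal.ofReal (ProbabilityTheory.beta (a + p) (b + q) / ProbabilityTheory.beta a b) •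
        betaMeasure (a + p) (b + q) := by
  rw [betaMeasure, betaMeasure, ← withDensity_mul _ (by fun_prop) (by fun_prop),
    ← withDensity_smul _ (by fun_prop)]
  refine withDensity_congr_ae ((ae_restrict_iff' measurableSet_Ioo).2 (ae_of_all _ ?_))
  rintro x ⟨hx0, hx1⟩
  have hx1' : 0 < 1 - x := sub_pos.2 hx1
  have hGa := Real.Gamma_pos_of_pos ha
  have hGb := Real.Gamma_pos_of_pos hb
  have hGab := Real.Gamma_pos_of_pos (add_pos ha hb)
  have hGap := Real.Gamma_pos_of_pos (show 0 < a + p by positivity)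
  have hGbq := Real.Gamma_pos_of_pos (show 0 < b + q by positivity)
  have hGabpq := Real.Gamma_pos_of_pos (show 0 < a + p + (b + q) by positivity)
  simp only [Pi.mul_apply, Pi.smul_apply, smul_eq_mul]
  rw [← ofReal_mul (by positivity), ← ofReal_mul (div_pos (ProbabilityTheory.beta_pos
    (by positivity) (by positivity)) (ProbabilityTheory.beta_pos ha hb)).le]
  congr 1
  rw [show a + p - 1 = a - 1 + p by ring, show b + q - 1 = b - 1 + q by ring,
    Real.rpow_add_natCast hx0.ne', Real.rpow_add_natCast hx1'.ne', ProbabilityTheory.beta,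
    ProbabilityTheory.beta]
  field_simp

theorem survMass_pos {m : ℕ+ → ℝ} (hm : ∀ t, 0 < m t) (hmsum : Summable m) (t : ℕ) :
    0 < survMass m t := by
  have hnonneg : ∀ s : ℕ+, 0 ≤ if t < (s : ℕ) then m s else 0 := fun s => by
    split_ifs <;> simp [(hm s).le]
  refine Summable.tsum_pos (hmsum.of_nonneg_of_le hnonneg fun s => ?_) hnonneg t.succPNat ?_
  · split_ifs <;> simp [(hm s).le]
  · simp [hm]

theorem stickWeight_nonneg {w : ℕ+ → ℝ} (hw : ∀ t, w t ∈ Icc 0 1) (t : ℕ+) :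
    0 ≤ stickWeight w t :=
  mul_nonneg (hw t).1 (Finset.prod_nonneg fun _ _ => sub_nonneg.2 (hw _).2)

theorem stickWeight_eq_prod (w : ℕ+ → ℝ) (t : ℕ+) {K : Finset ℕ+} (hK : Finset.Iic t ⊆ K) :
    stickWeight w t = ∏ s ∈ K, (if t = s then w s else 1) * (if s < t then 1 - w s else 1) := by
  have hfilter : K.filter (· < t) = (Finset.range ((t : ℕ) - 1)).image Nat.succPNat := by
    ext s
    simp only [Finset.mem_filter, Finset.mem_image, Finset.mem_range]
    constructor
    · rintro ⟨-, hst⟩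
      rw [← PNat.coe_lt_coe] at hst
      exact ⟨s.natPred, Nat.sub_lt_sub_right s.pos hst, PNat.succPNat_natPred s⟩
    · rintro ⟨k, hk, rfl⟩
      have hkt : k.succPNat < t := by rw [← PNat.coe_lt_coe, Nat.succPNat_coe]; omega
      exact ⟨hK (Finset.mem_Iic.2 hkt.le), hkt⟩
  rw [Finset.prod_mul_distrib, Finset.prod_ite_eq, if_pos (hK (Finset.mem_Iic.2 le_rfl)),
    ← Finset.prod_filter, hfilter, Finset.prod_image fun k _ l _ h => Nat.succPNat_inj.1 h,
    stickWeight]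

theorem prod_stickWeight {ι : Type*} [Fintype ι] (x : ι → ℕ+) (w : ℕ+ → ℝ) {K : Finset ℕ+}
    (hK : ∀ i, Finset.Iic (x i) ⊆ K) :
    ∏ i, stickWeight w (x i) = ∏ t ∈ K, w t ^ #{i | x i = t} * (1 - w t) ^ #{i | t < x i} := by
  simp_rw [stickWeight_eq_prod w _ (hK _)]
  rw [Finset.prod_comm]
  refine Finset.prod_congr rfl fun t _ => ?_
  rw [Finset.prod_mul_distrib, ← Finset.prod_filter, ← Finset.prod_filter, Finset.prod_const,
    Finset.prod_const]

theorem exists_pos_withDensity_prod_stickWeight_eq_smul {a b : ℕ+ → ℝ} (ha : ∀ t, 0 < a t)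
    (hb : ∀ t, 0 < b t) {ι : Type*} [Fintype ι] (x : ι → ℕ+) :
    ∃ C : ℝ, 0 < C ∧
      (Measure.infinitePi fun t => betaMeasure (a t) (b t)).withDensity
          (fun w => ENNReal.ofReal (∏ i, stickWeight w (x i))) =
        ENNReal.ofReal C • Measure.infinitePi fun t =>
          betaMeasure (a t + #{i | x i = t}) (b t + #{i | t < x i}) := by
  have := fun t => isProbabilityMeasure_betaMeasure (ha t) (hb t)
  have := fun t => isProbabilityMeasure_betaMeasure (a := a t + #{i | x i = t})
    (b := b t + #{i | t < x i}) (by positivity [ha t]) (by positivity [hb t])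
  set K := Finset.Iic (Finset.univ.sup x)
  have hK : ∀ i, Finset.Iic (x i) ⊆ K :=
    fun i => Finset.Iic_subset_Iic.2 (Finset.le_sup (Finset.mem_univ i))
  set c : ℕ+ → ℝ := fun t => ProbabilityTheory.beta (a t + #{i | x i = t})
    (b t + #{i | t < x i}) / ProbabilityTheory.beta (a t) (b t)
  have hc : ∀ t, 0 < c t := fun t =>
    div_pos (ProbabilityTheory.beta_pos (by positivity [ha t]) (by positivity [hb t]))
      (ProbabilityTheory.beta_pos (ha t) (hb t))
  have hdensity_one : ∀ t ∉ K,
      (fun y : ℝ => ENNReal.ofReal (y ^ #{i | x i = t} * (1 - y) ^ #{i | t < x i})) = 1 := by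
    intro t ht
    have hlt : ∀ i, x i < t := fun i =>
      (Finset.le_sup (Finset.mem_univ i)).trans_lt (not_le.1 (by simpa [K] using ht))
    have h_eq : #{i | x i = t} = 0 :=
      Finset.card_eq_zero.2 (Finset.filter_eq_empty_iff.2 fun i _ => (hlt i).ne)
    have h_gt : #{i | t < x i} = 0 :=
      Finset.card_eq_zero.2 (Finset.filter_eq_empty_iff.2 fun i _ => lt_asymm (hlt i))
    ext y
    simp [h_eq, h_gt]
  refine ⟨∏ t ∈ K, c t, Finset.prod_pos fun t _ => hc t, ?_⟩
  rw [ENNReal.ofReal_prod_of_nonneg fun t _ => (hc t).le, ← withDensity_prod_infinitePi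
    (by fun_prop) (fun _ => ofReal_ne_top)
    (fun t => betaMeasure_withDensity_pow_mul_pow (ha t) (hb t) _ _) hdensity_one]
  refine withDensity_congr_ae ?_
  -- `ofReal` splits over the factorised likelihood only where every factor is nonnegative.
  filter_upwards [ae_forall_infinitePi fun t => ae_mem_Ioo_betaMeasure (a t) (b t)] with w hw
  rw [prod_stickWeight x w hK, ENNReal.ofReal_prod_of_nonneg fun t _ =>
    mul_nonneg (pow_nonneg (hw t).1.le _) (pow_nonneg (sub_nonneg.2 (hw t).2.le) _)]

theorem dirichlet_posterior_general
    (m : ℕ+ → ℝ) (hm : ∀ t, 0 < m t) (hmsum : Summable m)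
    (L : Measure (ℕ+ → ℝ))
    (hL : ∀ (J : Finset ℕ+) (B : ℕ+ → Set ℝ), (∀ k, MeasurableSet (B k)) →
      L {w | ∀ k ∈ J, w k ∈ B k} =
        ∏ k ∈ J, betaMeasure (m k) (survMass m k) (B k))
    (n : ℕ) (xobs : Fin n → ℕ+) :
    0 < (∫ w, ∏ i : Fin n, stickWeight w (xobs i) ∂L) ∧
    ∀ (L' : Measure (ℕ+ → ℝ)), IsProbabilityMeasure L' →
      (∀ (J : Finset ℕ+) (B : ℕ+ → Set ℝ), (∀ k, MeasurableSet (B k)) →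
        L' {w | ∀ k ∈ J, w k ∈ B k} =
          ∏ k ∈ J, betaMeasure
            (m k + (Finset.univ.filter (fun i : Fin n => xobs i = k)).card)
            (survMass m k + (Finset.univ.filter (fun i : Fin n => k < xobs i)).card)
            (B k)) →
      L.withDensity (fun w => ENNReal.ofReal (∏ i : Fin n, stickWeight w (xobs i))) =
        ENNReal.ofReal (∫ w, ∏ i : Fin n, stickWeight w (xobs i) ∂L) • L' := by
  have hsurv : ∀ t : ℕ+, 0 < survMass m t := fun t => survMass_pos hm hmsum t
  have := fun t => isProbabilityMeasure_betaMeasure (hm t) (hsurv t)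
  have := fun t => isProbabilityMeasure_betaMeasure (a := m t + #{i | xobs i = t})
    (b := survMass m t + #{i | t < xobs i}) (by positivity [hm t]) (by positivity [hsurv t])
  have hprior : L = Measure.infinitePi fun t => betaMeasure (m t) (survMass m t) :=
    Measure.eq_infinitePi _ fun s t ht => hL s t ht
  obtain ⟨C, hC, hpost⟩ := exists_pos_withDensity_prod_stickWeight_eq_smul hm hsurv xobs
  have hlik_nonneg : 0 ≤ᵐ[L] fun w => ∏ i, stickWeight w (xobs i) := by
    rw [hprior]
    filter_upwards [ae_forall_infinitePi fun t => ae_mem_Ioo_betaMeasure _ _] with w hw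
    exact Finset.prod_nonneg fun i _ => stickWeight_nonneg (fun t => Ioo_subset_Icc_self (hw t)) _
  have hZ : ∫ w, ∏ i, stickWeight w (xobs i) ∂L = C :=
    integral_eq_of_withDensity_ofReal_eq_smul hlik_nonneg
      (by unfold stickWeight; fun_prop) hC.le (hprior ▸ hpost)
  refine ⟨hZ ▸ hC, fun L' _ hL' => ?_⟩
  rw [hZ, hprior, hpost, Measure.eq_infinitePi _ fun s t ht => hL' s t ht]

/-- **conjugacy of the Dirichlet process.**  With `n_t = #{i : x_i = t}`
and likelihood `L(w) = ∏_{i=1}^n P_w({x_i})`, the normalizing constant `Z = ∫ L dΛ_m` is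
in `(0,∞)` and `Λ_m` weighted by the density `L` equals `Z ⬝ Λ_{m_*}`, where `m_*({t}) =
m({t}) + n_t` (so that `m_*((t,∞)) = m((t,∞)) + n_{>t}` with `n_{>t} = #{i : x_i > t}`):
the posterior of a Dirichlet process `Dir(m)` given an i.i.d. sample `X_1, …, X_n` is the
Dirichlet process `Dir(m_*)`. -/
theorem dirichlet_posterior
    (m : ℕ+ → ℝ) (hm : ∀ t, 0 < m t) (hmsum : Summable m)
    (L : Measure (ℕ+ → ℝ)) [IsProbabilityMeasure L]
    (hL : ∀ (J : Finset ℕ+) (B : ℕ+ → Set ℝ), (∀ k, MeasurableSet (B k)) →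
      L {w | ∀ k ∈ J, w k ∈ B k} =
        ∏ k ∈ J, betaMeasure (m k) (survMass m k) (B k))
    (n : ℕ) (hn : 1 ≤ n) (xobs : Fin n → ℕ+) :
    0 < (∫ w, ∏ i : Fin n, stickWeight w (xobs i) ∂L) ∧
    ∀ (L' : Measure (ℕ+ → ℝ)), IsProbabilityMeasure L' →
      (∀ (J : Finset ℕ+) (B : ℕ+ → Set ℝ), (∀ k, MeasurableSet (B k)) →
        L' {w | ∀ k ∈ J, w k ∈ B k} =
          ∏ k ∈ J, betaMeasure
            (m k + (Finset.univ.filter (fun i : Fin n => xobs i = k)).card)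
            (survMass m k + (Finset.univ.filter (fun i : Fin n => k < xobs i)).card)
            (B k)) →
      L.withDensity (fun w => ENNReal.ofReal (∏ i : Fin n, stickWeight w (xobs i))) =
        ENNReal.ofReal (∫ w, ∏ i : Fin n, stickWeight w (xobs i) ∂L) • L' :=
  dirichlet_posterior_general m hm hmsum L hL n xobs
end
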